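/- arXiv:1709.02735 — 2 statements merged into one kernel-verified Lean document; each statement's English description precedes it below -/
import Mathlib

section
/- Let $\lambda_1, \ldots, \lambda_n$ be real numbers, $a_1, \ldots, a_n$ and $b_1, \ldots, b_n$ real numbers. Define the $(n+1)\times(n+1)$ matrix $A_1$ with first row zero, first column $(0, a_1, \ldots, a_n)^\top$, and diagonal entries $0, \lambda_1, \ldots, \lambda_n$ (all other entries zero), and $B_1 = (1, b_1, \ldots, b_n)^\top$. Then $\det(B_1, A_1 B_1, \ldots, A_1^n B_1) = \prod_{j=1}^n (a_j + \lambda_j b_j) \cdot \mathrm{VdM}(\lambda_1, \ldots, \lambda_n)$, where $\mathrm{VdM}$ is the Vandermonde determinant $\prod_{1 \le i < j \le n}(\lambda_j - \lambda_i)$. -/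
/-- The matrix `A₁` with first row zero, first column `(0, a₁, …, aₙ)ᵀ`,
diagonal `0, λ₁, …, λₙ`, and all other entries zero. -/
def A1mat {n : ℕ} (lam a : Fin n → ℝ) : Matrix (Fin (n + 1)) (Fin (n + 1)) ℝ :=
  Matrix.of fun i j =>
    Fin.cases 0
      (fun i' => Fin.cases (a i') (fun j' => if j' = i' then lam i' else 0) j) i

/-- The vector `B₁ = (1, b₁, …, bₙ)ᵀ`. -/
def B1vec {n : ℕ} (b : Fin n → ℝ) : Fin (n + 1) → ℝ :=
  fun i => Fin.cases 1 b i

/-- Kalman controllability matrix: columns are `A^k ⬝ v` for `k = 0, …, n`. -/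
def kalmanMatrix {n : ℕ} (A : Matrix (Fin (n + 1)) (Fin (n + 1)) ℝ)
    (v : Fin (n + 1) → ℝ) : Matrix (Fin (n + 1)) (Fin (n + 1)) ℝ :=
  Matrix.of fun i k => ((A ^ (k : ℕ)).mulVec v) i

lemma A1_mulVec {n : ℕ} (lam a : Fin n → ℝ) (w : Fin (n + 1) → ℝ) :
    (A1mat lam a).mulVec w =
      fun i => Fin.cases 0 (fun i' => a i' * w 0 + lam i' * w i'.succ) i := by
  funext i
  induction i using Fin.cases with
  | zero =>
    simp [Matrix.mulVec, dotProduct, A1mat]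
  | succ i' =>
    simp only [Matrix.mulVec, dotProduct, A1mat, Matrix.of_apply, Fin.cases_succ]
    rw [Fin.sum_univ_succ]
    simp [Fin.cases_succ, ite_mul, Finset.sum_ite_eq']

lemma pow_mulVec {n : ℕ} (lam a b : Fin n → ℝ) (k : ℕ) :
    ((A1mat lam a) ^ k).mulVec (B1vec b) =
      fun i => Fin.cases (if k = 0 then (1:ℝ) else 0)
        (fun i' => if k = 0 then b i' else lam i' ^ (k - 1) * (a i' + lam i' * b i')) i := by
  induction k with
  | zero =>
    funext i
    induction i using Fin.cases <;> simp [B1vec]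
  | succ k ih =>
    rw [pow_succ', ← Matrix.mulVec_mulVec, ih, A1_mulVec]
    funext i
    induction i using Fin.cases with
    | zero => simp
    | succ i' =>
      simp only [Fin.cases_succ, Fin.cases_zero]
      rcases Nat.eq_zero_or_pos k with hk | hk
      · subst hk; simp [mul_comm]
      · have hk' : k ≠ 0 := hk.ne'
        have : k - 1 + 1 = k := Nat.succ_pred_eq_of_pos hk
        simp only [hk', if_false, Nat.succ_ne_zero, Nat.add_sub_cancel]
        rw [mul_zero, zero_add, ← mul_assoc, ← pow_succ', this]

theorem det_kalman_eq {n : ℕ} (lam a b : Fin n → ℝ) :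
    (kalmanMatrix (A1mat lam a) (B1vec b)).det =
      (∏ j : Fin n, (a j + lam j * b j)) *
        ∏ i : Fin n, ∏ j ∈ Finset.univ.filter (fun j => i < j), (lam j - lam i) := by
  have hM : kalmanMatrix (A1mat lam a) (B1vec b) =
      Matrix.of fun i k => Fin.cases (if (k:ℕ) = 0 then (1:ℝ) else 0)
        (fun i' => if (k:ℕ) = 0 then b i'
          else lam i' ^ ((k:ℕ) - 1) * (a i' + lam i' * b i')) i := by
    ext i k
    rw [kalmanMatrix, Matrix.of_apply, pow_mulVec]
    rfl
  rw [hM, Matrix.det_succ_row_zero, Fin.sum_univ_succ]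
  have h0 : ∀ j : Fin n, ((Matrix.of fun i k => Fin.cases (if (k:ℕ) = 0 then (1:ℝ) else 0)
        (fun i' => if (k:ℕ) = 0 then b i'
          else lam i' ^ ((k:ℕ) - 1) * (a i' + lam i' * b i')) i) :
          Matrix (Fin (n+1)) (Fin (n+1)) ℝ) 0 j.succ = 0 := by
    intro j; simp
  simp only [h0, mul_zero, zero_mul, Finset.sum_const_zero, add_zero]
  simp only [Matrix.of_apply, Fin.cases_zero, Fin.val_zero, if_pos rfl, Fin.val_zero,
    pow_zero, one_mul, mul_one]
  have hsub : ((Matrix.of fun i k => Fin.cases (if (k:ℕ) = 0 then (1:ℝ) else 0)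
        (fun i' => if (k:ℕ) = 0 then b i'
          else lam i' ^ ((k:ℕ) - 1) * (a i' + lam i' * b i')) i) :
          Matrix (Fin (n+1)) (Fin (n+1)) ℝ).submatrix Fin.succ (Fin.succAbove 0) =
      Matrix.of fun i j => (a i + lam i * b i) * (Matrix.vandermonde lam) i j := by
    ext i j
    simp only [Matrix.submatrix_apply, Fin.zero_succAbove, Matrix.of_apply, Fin.cases_succ,
      Fin.val_succ, Matrix.vandermonde_apply]
    rw [if_neg (Nat.succ_ne_zero _), Nat.add_sub_cancel, mul_comm]
  rw [hsub, Matrix.det_mul_column, Matrix.det_vandermonde]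
  rw [show (if True then (1:ℝ) else 0) = 1 from rfl]
  rw [one_mul]
  congr 1
  refine Finset.prod_congr rfl fun i _ => Finset.prod_congr ?_ fun _ _ => rfl
  ext j; simp
end

section
/- Under the hypotheses of the previous matrix construction, if the $\lambda_j$ are pairwise distinct and $a_j + \lambda_j b_j \neq 0$ for all $j = 1, \ldots, n$, then the pair $(A_1, B_1)$ satisfies the Kalman rank condition: $\mathrm{rank}(B_1, A_1 B_1, \ldots, A_1^n B_1) = n+1$. -/
/-! The first row of the Kalman matrix of `(A₁, B₁)` is `(1, 0, …, 0)`, and since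
`A₁ᵏ⁺¹ B₁ = (0, λⱼᵏ (aⱼ + λⱼ bⱼ))ⱼ`, its lower right `n × n` block is
`diag(aⱼ + λⱼ bⱼ) · V(λ)` with `V(λ)` the Vandermonde matrix. Hence its determinant is
`∏ⱼ (aⱼ + λⱼ bⱼ) · det V(λ)`, nonzero as the `λⱼ` are distinct. -/

open Matrix

theorem Matrix.det_eq_det_submatrix_succ_of_row_zero_eq_single {R : Type*} [CommRing R] {n : ℕ}
    (M : Matrix (Fin (n + 1)) (Fin (n + 1)) R) (h : M 0 = Pi.single 0 1) :
    M.det = (M.submatrix Fin.succ Fin.succ).det := by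
  simp [det_succ_row_zero, Fin.sum_univ_succ, h]

section A1mat

variable {n : ℕ} (lam a : Fin n → ℝ)

theorem A1mat_mulVec (v : Fin (n + 1) → ℝ) :
    A1mat lam a *ᵥ v = Fin.cons 0 fun j => a j * v 0 + lam j * v j.succ := by
  funext i
  induction i using Fin.cases with
  | zero => simp [mulVec, dotProduct, A1mat]
  | succ j =>
    simp [mulVec, dotProduct, A1mat, Fin.sum_univ_succ, ite_mul, Finset.sum_ite_eq']

theorem A1mat_pow_succ_mulVec_B1vec (b : Fin n → ℝ) (k : ℕ) :
    A1mat lam a ^ (k + 1) *ᵥ B1vec b = Fin.cons 0 fun j => lam j ^ k * (a j + lam j * b j) := by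
  induction k with
  | zero =>
    rw [pow_one, A1mat_mulVec]
    funext i
    induction i using Fin.cases <;> simp [B1vec]
  | succ k ih =>
    rw [pow_succ', ← mulVec_mulVec, ih, A1mat_mulVec]
    funext i
    induction i using Fin.cases with
    | zero => simp
    | succ j => simp only [Fin.cons_zero, Fin.cons_succ]; ring

theorem kalmanMatrix_A1mat_row_zero (b : Fin n → ℝ) :
    kalmanMatrix (A1mat lam a) (B1vec b) 0 = Pi.single 0 1 := by
  funext k
  induction k using Fin.cases with
  | zero => simp [kalmanMatrix, B1vec]
  | succ k => simp [kalmanMatrix, A1mat_pow_succ_mulVec_B1vec]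

theorem kalmanMatrix_A1mat_submatrix_succ (b : Fin n → ℝ) :
    (kalmanMatrix (A1mat lam a) (B1vec b)).submatrix Fin.succ Fin.succ =
      diagonal (fun j => a j + lam j * b j) * vandermonde lam := by
  funext j k
  simp [kalmanMatrix, A1mat_pow_succ_mulVec_B1vec, diagonal_mul, vandermonde, mul_comm]

theorem det_kalmanMatrix_A1mat (b : Fin n → ℝ) :
    (kalmanMatrix (A1mat lam a) (B1vec b)).det =
      (∏ j, (a j + lam j * b j)) * (vandermonde lam).det := by
  rw [det_eq_det_submatrix_succ_of_row_zero_eq_single _ (kalmanMatrix_A1mat_row_zero lam a b),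
    kalmanMatrix_A1mat_submatrix_succ, det_mul, det_diagonal]

end A1mat

theorem kalman_rank_of_distinct {n : ℕ} (lam a b : Fin n → ℝ)
    (hdist : Function.Injective lam)
    (hab : ∀ j : Fin n, a j + lam j * b j ≠ 0) :
    (kalmanMatrix (A1mat lam a) (B1vec b)).rank = n + 1 := by
  have hdet : (kalmanMatrix (A1mat lam a) (B1vec b)).det ≠ 0 := by
    rw [det_kalmanMatrix_A1mat]
    exact mul_ne_zero (Finset.prod_ne_zero_iff.mpr fun j _ => hab j)
      (det_vandermonde_ne_zero_iff.mpr hdist)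
  rw [rank_of_isUnit _ ((isUnit_iff_isUnit_det _).mpr hdet.isUnit), Fintype.card_fin]
end
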